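/- arXiv:1404.3819 — 4 statements merged into one kernel-verified Lean document; each statement's English description precedes it below -/
import Mathlib

section
/- Suppose differentiable functions r(a), R(a) and a constant n satisfy the Riccati equation R′ = 4r + R² − 2aR and the equation r′ = 2r²/R − (n + r)R with R(a) ≠ 0 on an interval. Then R satisfies the second order ODE R″ = (R′)²/(2R) + 2(a² − 1 − 2n) R − 4a R² + (3/2) R³. -/
/-! Differentiate the Riccati equation for `R`, substitute the equation for `r′`, and eliminate `r`
using the Riccati equation itself, `4 r = R′ - R² + 2 a R`. -/

theorem HasDerivAt.riccati_rhs {r R : ℝ → ℝ} {r₁ R₁ a : ℝ} (hr : HasDerivAt r r₁ a)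
    (hR : HasDerivAt R R₁ a) :
    HasDerivAt (fun x => 4 * r x + R x ^ 2 - 2 * x * R x)
      (4 * r₁ + 2 * R a * R₁ - (2 * R a + 2 * a * R₁)) a := by
  have hxR := ((hasDerivAt_id' a).const_mul 2).mul hR
  refine (((hr.const_mul 4).add (hR.pow 2)).sub hxR).congr_deriv ?_
  push_cast
  ring

theorem riccati_second_order_identity (n a r R R₁ : ℝ) (hR : R ≠ 0)
    (hRic : R₁ = 4 * r + R ^ 2 - 2 * a * R) :
    4 * (2 * r ^ 2 / R - (n + r) * R) + 2 * R * R₁ - (2 * R + 2 * a * R₁)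
      = R₁ ^ 2 / (2 * R) + 2 * (a ^ 2 - 1 - 2 * n) * R - 4 * a * R ^ 2 + (3 / 2) * R ^ 3 := by
  have hr : r = (R₁ - R ^ 2 + 2 * a * R) / 4 := by linarith
  subst hr
  field_simp
  ring

/-- From the Riccati equations for r and R, R satisfies a second order ODE. -/
theorem stmt_7 (n : ℝ) (I : Set ℝ) (hI : IsOpen I) (r R R' R'' : ℝ → ℝ)
    (hRne : ∀ a ∈ I, R a ≠ 0)
    (hdR : ∀ a ∈ I, HasDerivAt R (R' a) a)
    (hdR' : ∀ a ∈ I, HasDerivAt R' (R'' a) a)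
    (hdr : ∀ a ∈ I, HasDerivAt r (2 * (r a) ^ 2 / R a - (n + r a) * R a) a)
    (hRic : ∀ a ∈ I, R' a = 4 * r a + (R a) ^ 2 - 2 * a * R a) :
    ∀ a ∈ I, R'' a = (R' a) ^ 2 / (2 * R a) + 2 * (a ^ 2 - 1 - 2 * n) * R a
      - 4 * a * (R a) ^ 2 + (3 / 2) * (R a) ^ 3 := by
  intro a ha
  have hR'_eq : R' =ᶠ[nhds a] fun x => 4 * r x + R x ^ 2 - 2 * x * R x :=
    Filter.eventually_of_mem (hI.mem_nhds ha) hRic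
  have hR'' := (hdR' a ha).unique
    (((hdr a ha).riccati_rhs (hdR a ha)).congr_of_eventuallyEq hR'_eq)
  rw [hR'']
  exact riccati_second_order_identity n a (r a) (R a) (R' a) (hRne a ha) (hRic a ha)
end

section
/- If σ is twice differentiable and there exist r, R with R nowhere zero such that σ′ = 2r, −(n+r)R + 2r²/R = r′, and (n+r)R + 2r²/R = 2ar − σ, then σ satisfies the Jimbo–Miwa–Okamoto σ-form of Painlevé IV: (σ″)² = 4(a σ′ − σ)² − 4(σ′)²(σ′ + 2n). -/
/-!
Write `A = (n + r) R` and `B = 2 r² / R`. The two Riccati-type equations say `r' = B - A` and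
`a σ' - σ = 2 a r - σ = A + B`, while `A B = 2 r² (n + r)` no longer involves `R`. Since `σ'' = 2 r'`,
the σ-form is the identity `(B - A)² = (A + B)² - 4 A B`.
-/

theorem HasDerivAt.eq_const_mul_of_eqOn {f g : ℝ → ℝ} {s : Set ℝ} {c f' g' a : ℝ}
    (hs : IsOpen s) (ha : a ∈ s) (hfg : Set.EqOn f (fun x => c * g x) s)
    (hf : HasDerivAt f f' a) (hg : HasDerivAt g g' a) : f' = c * g' :=
  hf.unique <| (hg.const_mul c).congr_of_eventuallyEq <|
    Filter.eventuallyEq_of_mem (hs.mem_nhds ha) hfg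

theorem painleveIV_sigma_form_of_riccati {n a s s' s'' r r' R : ℝ} (hR : R ≠ 0)
    (hs' : s' = 2 * r) (hs'' : s'' = 2 * r')
    (h1 : -((n + r) * R) + 2 * r ^ 2 / R = r')
    (h2 : (n + r) * R + 2 * r ^ 2 / R = 2 * a * r - s) :
    s'' ^ 2 = 4 * (a * s' - s) ^ 2 - 4 * s' ^ 2 * (s' + 2 * n) := by
  have hAB : (n + r) * R * (2 * r ^ 2 / R) = 2 * r ^ 2 * (n + r) := by
    field_simp
  have hs : s = 2 * a * r - ((n + r) * R + 2 * r ^ 2 / R) := by linarith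
  rw [hs'', hs', ← h1, hs]
  linear_combination (-16 : ℝ) * hAB

theorem stmt_13_general (n : ℝ) (I : Set ℝ) (hI : IsOpen I) (σ σ' σ'' r r' R : ℝ → ℝ)
    (hRne : ∀ a ∈ I, R a ≠ 0)
    (hdσ' : ∀ a ∈ I, HasDerivAt σ' (σ'' a) a)
    (hdr : ∀ a ∈ I, HasDerivAt r (r' a) a)
    (hσr : ∀ a ∈ I, σ' a = 2 * r a)
    (h1 : ∀ a ∈ I, -((n + r a) * R a) + 2 * (r a) ^ 2 / R a = r' a)
    (h2 : ∀ a ∈ I, (n + r a) * R a + 2 * (r a) ^ 2 / R a = 2 * a * r a - σ a) :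
    ∀ a ∈ I, (σ'' a) ^ 2
      = 4 * (a * σ' a - σ a) ^ 2 - 4 * (σ' a) ^ 2 * (σ' a + 2 * n) := by
  intro a ha
  have hσ'' : σ'' a = 2 * r' a :=
    (hdσ' a ha).eq_const_mul_of_eqOn hI ha hσr (hdr a ha)
  exact painleveIV_sigma_form_of_riccati (hRne a ha) (hσr a ha) hσ'' (h1 a ha) (h2 a ha)

/-- The Jimbo–Miwa–Okamoto σ-form of Painlevé IV. -/
theorem stmt_13 (n : ℝ) (I : Set ℝ) (hI : IsOpen I) (σ σ' σ'' r r' R : ℝ → ℝ)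
    (hRne : ∀ a ∈ I, R a ≠ 0)
    (hdσ : ∀ a ∈ I, HasDerivAt σ (σ' a) a)
    (hdσ' : ∀ a ∈ I, HasDerivAt σ' (σ'' a) a)
    (hdr : ∀ a ∈ I, HasDerivAt r (r' a) a)
    (hσr : ∀ a ∈ I, σ' a = 2 * r a)
    (h1 : ∀ a ∈ I, -((n + r a) * R a) + 2 * (r a) ^ 2 / R a = r' a)
    (h2 : ∀ a ∈ I, (n + r a) * R a + 2 * (r a) ^ 2 / R a = 2 * a * r a - σ a) :
    ∀ a ∈ I, (σ'' a) ^ 2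
      = 4 * (a * σ' a - σ a) ^ 2 - 4 * (σ' a) ^ 2 * (σ' a + 2 * n) :=
  stmt_13_general n I hI σ σ' σ'' r r' R hRne hdσ' hdr hσr h1 h2
end

section
/- Suppose real sequences r_n, R_n and a real a satisfy r_{n+1} + r_n = a R_n, 2r_n² = (n + r_n)R_n R_{n-1}, and r_n = (1/4)(R_n R_{n-1} ± √(R_n R_{n-1})√(8n + R_n R_{n-1})). Then R_n satisfies the second order difference equation R_{n-1} R_{n+1} (R_n R_{n-1} + 8n)(R_{n+1} R_n + 8n + 8) = [8 R_n a² + R_n R_{n-1} R_{n+1} − 4(a R_n + n + 1) R_{n+1} − 4(a R_n + n) R_{n-1}]². -/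
/-!
Completing the square in `2 r_n² = (n + r_n) R_n R_{n-1}` gives
`(4 r_n - R_n R_{n-1})² = R_n R_{n-1} (R_n R_{n-1} + 8n)`, and likewise at `n + 1`.
Eliminating `r_{n+1} = a R_n - r_n`, the product `(4 r_n - R_n R_{n-1}) (4 r_{n+1} - R_{n+1} R_n)`
equals `R_n` times the bracket on the right, so multiplying the two squares and cancelling `R_n²`
removes `r` altogether.
-/

section

variable {K : Type*} [CommRing K]

theorem sq_four_mul_sub_eq_of_two_mul_sq {m x P : K} (h : 2 * x ^ 2 = (m + x) * P) :
    (4 * x - P) ^ 2 = P * (P + 8 * m) := by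
  linear_combination 8 * h

theorem four_mul_sub_mul_four_mul_sub_eq {a m x y R₀ R₁ R₂ : K} (hsum : y + x = a * R₁)
    (hx : 2 * x ^ 2 = (m + x) * (R₁ * R₀)) (hy : 2 * y ^ 2 = (m + 1 + y) * (R₂ * R₁)) :
    (4 * x - R₁ * R₀) * (4 * y - R₂ * R₁)
      = (8 * R₁ * a ^ 2 + R₁ * R₀ * R₂ - 4 * (a * R₁ + m + 1) * R₂ - 4 * (a * R₁ + m) * R₀)
        * R₁ := by
  linear_combination (-4 : K) * hx - 4 * hy + (8 * (x + y) + 8 * a * R₁ - 4 * R₂ * R₁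
    - 4 * R₁ * R₀) * hsum

theorem second_order_eq_of_two_mul_sq [IsDomain K] {a m x y R₀ R₁ R₂ : K} (hR₁ : R₁ ≠ 0)
    (hsum : y + x = a * R₁)
    (hx : 2 * x ^ 2 = (m + x) * (R₁ * R₀)) (hy : 2 * y ^ 2 = (m + 1 + y) * (R₂ * R₁)) :
    R₀ * R₂ * (R₁ * R₀ + 8 * m) * (R₂ * R₁ + 8 * m + 8)
      = (8 * R₁ * a ^ 2 + R₁ * R₀ * R₂ - 4 * (a * R₁ + m + 1) * R₂
          - 4 * (a * R₁ + m) * R₀) ^ 2 := by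
  refine mul_right_cancel₀ (pow_ne_zero 2 hR₁) ?_
  have hx' := sq_four_mul_sub_eq_of_two_mul_sq hx
  have hy' := sq_four_mul_sub_eq_of_two_mul_sq (m := m + 1) hy
  calc R₀ * R₂ * (R₁ * R₀ + 8 * m) * (R₂ * R₁ + 8 * m + 8) * R₁ ^ 2
      = (R₁ * R₀ * (R₁ * R₀ + 8 * m)) * (R₂ * R₁ * (R₂ * R₁ + 8 * (m + 1))) := by ring
    _ = ((4 * x - R₁ * R₀) * (4 * y - R₂ * R₁)) ^ 2 := by rw [← hx', ← hy']; ring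
    _ = _ := by rw [four_mul_sub_mul_four_mul_sub_eq hsum hx hy]; ring

end

theorem stmt_15_general (a : ℝ) (r R : ℕ → ℝ)
    (hRne : ∀ n : ℕ, R n ≠ 0)
    (hrec : ∀ n : ℕ, r (n + 1) + r n = a * R n)
    (hq : ∀ n : ℕ, 1 ≤ n → 2 * (r n) ^ 2 = ((n : ℝ) + r n) * (R n * R (n - 1))) :
    ∀ n : ℕ, 1 ≤ n →
      R (n - 1) * R (n + 1) * (R n * R (n - 1) + 8 * (n : ℝ))
          * (R (n + 1) * R n + 8 * (n : ℝ) + 8)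
        = (8 * R n * a ^ 2 + R n * R (n - 1) * R (n + 1)
            - 4 * (a * R n + (n : ℝ) + 1) * R (n + 1)
            - 4 * (a * R n + (n : ℝ)) * R (n - 1)) ^ 2 := by
  intro n hn
  have hnext := hq (n + 1) (Nat.le_add_left 1 n)
  rw [Nat.add_sub_cancel, Nat.cast_succ] at hnext
  exact second_order_eq_of_two_mul_sq (hRne n) (hrec n) (hq n hn) hnext

/-- Second order difference equation for R_n. -/
theorem stmt_15 (a : ℝ) (r R : ℕ → ℝ) (ε : ℕ → ℝ)
    (hRne : ∀ n : ℕ, R n ≠ 0)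
    (hrne : ∀ n : ℕ, (n : ℝ) + r n ≠ 0)
    (hrec : ∀ n : ℕ, r (n + 1) + r n = a * R n)
    (hq : ∀ n : ℕ, 1 ≤ n → 2 * (r n) ^ 2 = ((n : ℝ) + r n) * (R n * R (n - 1)))
    (hε : ∀ n : ℕ, ε n = 1 ∨ ε n = -1)
    (hroot : ∀ n : ℕ, 1 ≤ n →
      r n = (1 / 4) * (R n * R (n - 1)
        + ε n * Real.sqrt (R n * R (n - 1) * (8 * (n : ℝ) + R n * R (n - 1))))) :
    ∀ n : ℕ, 1 ≤ n →
      R (n - 1) * R (n + 1) * (R n * R (n - 1) + 8 * (n : ℝ))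
          * (R (n + 1) * R n + 8 * (n : ℝ) + 8)
        = (8 * R n * a ^ 2 + R n * R (n - 1) * R (n + 1)
            - 4 * (a * R n + (n : ℝ) + 1) * R (n + 1)
            - 4 * (a * R n + (n : ℝ)) * R (n - 1)) ^ 2 :=
  stmt_15_general a r R hRne hrec hq
end

section
/- Suppose p(n,a), r_n(a), R_n(a) are differentiable in a and satisfy: −p(n,a) = n(n−1)/4 − (1/4 + a²/2) r_n + (a/4)(n + r_n)R_n + (a/2) r_n²/R_n; dp/da = a r_n − ((n + r_n)/2) R_n; and dr_n/da = 2r_n²/R_n − (n + r_n)R_n, with R_n nowhere zero. If additionally −2r_n² + (n + r_n)R_n² ≠ 0, then R_n satisfies the Riccati equation R_n′ = 4 r_n + R_n² − 2a R_n. -/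
/-!
Differentiating the first equation and eliminating `p'` and `r'` with the other two leaves,
after clearing the denominator `R³`, the identity
`a · (-2 r² + (n + r) R²) · (R' - (4 r + R² - 2 a R)) = 0`.
So the Riccati equation holds wherever `a ≠ 0`. At `a = 0` it follows by continuity: `R` has
derivative `4 r + R² - 2 a R` on a punctured neighbourhood of `0`, and this expression is
continuous at `0`, so it is also the derivative of `R` at `0`.
-/

open Set Filter Topology

theorem hasDerivAt_of_eventually_hasDerivAt_of_ne {E : Type*} [NormedAddCommGroup E]
    [NormedSpace ℝ E] {f g : ℝ → E} {x : ℝ}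
    (f_diff : ∀ᶠ y in 𝓝[≠] x, HasDerivAt f (g y) y) (hf : ContinuousAt f x)
    (hg : ContinuousAt g x) : HasDerivAt f (g x) x := by
  have diff : DifferentiableOn ℝ f {y | HasDerivAt f (g y) y} := fun y hy =>
    hy.differentiableAt.differentiableWithinAt
  have lim : ∀ {l : Filter ℝ}, (∀ᶠ y in l, HasDerivAt f (g y) y) → l ≤ 𝓝 x →
      Tendsto (deriv f) l (𝓝 (g x)) := fun hl hlx =>
    (hg.tendsto.mono_left hlx).congr' (hl.mono fun y hy => hy.deriv.symm)
  have right : ∀ᶠ y in 𝓝[>] x, HasDerivAt f (g y) y :=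
    nhdsWithin_mono x (fun y hy => ne_of_gt hy) f_diff
  have left : ∀ᶠ y in 𝓝[<] x, HasDerivAt f (g y) y :=
    nhdsWithin_mono x (fun y hy => ne_of_lt hy) f_diff
  have A := hasDerivWithinAt_Ici_of_tendsto_deriv diff hf.continuousWithinAt right
    (lim right nhdsWithin_le_nhds)
  have B := hasDerivWithinAt_Iic_of_tendsto_deriv diff hf.continuousWithinAt left
    (lim left nhdsWithin_le_nhds)
  simpa using B.union A

theorem hasDerivAt_rhs_first_equation (n : ℝ) {r R : ℝ → ℝ} {a r' R' : ℝ} (hr : HasDerivAt r r' a)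
    (hR : HasDerivAt R R' a) (hR0 : R a ≠ 0) :
    HasDerivAt (fun x => n * (n - 1) / 4 - (1 / 4 + x ^ 2 / 2) * r x
        + (x / 4) * (n + r x) * R x + (x / 2) * r x ^ 2 / R x)
      (-(a * r a) - (1 / 4 + a ^ 2 / 2) * r' + (n + r a) * R a / 4
        + (a / 4) * (r' * R a + (n + r a) * R')
        + ((r a ^ 2 / 2 + a * r a * r') * R a - (a / 2) * r a ^ 2 * R') / R a ^ 2) a := by
  have hx := hasDerivAt_id a
  have h := (((hasDerivAt_const a (n * (n - 1) / 4)).sub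
    (((hx.pow 2).div_const 2).const_add (1 / 4) |>.mul hr)).add
    (((hx.div_const 4).mul (hr.const_add n)).mul hR)).add
    (((hx.div_const 2).mul (hr.pow 2)).div hR hR0)
  refine (h.congr_of_eventuallyEq (.of_forall fun x => ?_)).congr_deriv ?_
  · rfl
  · simp only [Pi.mul_apply, Pi.pow_apply, id]
    ring

theorem mul_riccati_defect_eq_zero {n : ℝ} {p r R : ℝ → ℝ} {a p' r' R' : ℝ}
    (hp : HasDerivAt p p' a) (hr : HasDerivAt r r' a) (hR : HasDerivAt R R' a) (hR0 : R a ≠ 0)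
    (h1 : ∀ᶠ x in 𝓝 a, -p x = n * (n - 1) / 4 - (1 / 4 + x ^ 2 / 2) * r x
      + (x / 4) * (n + r x) * R x + (x / 2) * r x ^ 2 / R x)
    (h2 : p' = a * r a - ((n + r a) / 2) * R a)
    (h3 : r' = 2 * r a ^ 2 / R a - (n + r a) * R a) :
    a * (-2 * r a ^ 2 + (n + r a) * R a ^ 2) * (R' - (4 * r a + R a ^ 2 - 2 * a * R a)) = 0 := by
  have hderiv := (hasDerivAt_rhs_first_equation n hr hR hR0).unique (hp.neg.congr_of_eventuallyEq
    (h1.mono fun x hx => hx.symm))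
  subst h2 h3
  field_simp at hderiv
  linear_combination (1 / 2) * hderiv

/-- The Riccati equation R′ = 4r + R² − 2aR follows from the three displayed
equations. -/
theorem stmt_17 (n : ℕ) (I : Set ℝ) (hI : IsOpen I) (p r R p' r' R' : ℝ → ℝ)
    (hRne : ∀ a ∈ I, R a ≠ 0)
    (hne : ∀ a ∈ I, -2 * (r a) ^ 2 + ((n : ℝ) + r a) * (R a) ^ 2 ≠ 0)
    (hdp : ∀ a ∈ I, HasDerivAt p (p' a) a)
    (hdr : ∀ a ∈ I, HasDerivAt r (r' a) a)
    (hdR : ∀ a ∈ I, HasDerivAt R (R' a) a)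
    (h1 : ∀ a ∈ I, -(p a) = (n : ℝ) * ((n : ℝ) - 1) / 4
      - (1 / 4 + a ^ 2 / 2) * r a + (a / 4) * ((n : ℝ) + r a) * R a
      + (a / 2) * (r a) ^ 2 / R a)
    (h2 : ∀ a ∈ I, p' a = a * r a - (((n : ℝ) + r a) / 2) * R a)
    (h3 : ∀ a ∈ I, r' a = 2 * (r a) ^ 2 / R a - ((n : ℝ) + r a) * R a) :
    ∀ a ∈ I, R' a = 4 * r a + (R a) ^ 2 - 2 * a * R a := by
  have off_zero : ∀ a ∈ I, a ≠ 0 → R' a = 4 * r a + R a ^ 2 - 2 * a * R a := fun a ha ha0 =>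
    sub_eq_zero.1 <| (mul_eq_zero.1 <| mul_riccati_defect_eq_zero (hdp a ha) (hdr a ha)
      (hdR a ha) (hRne a ha) (eventually_of_mem (hI.mem_nhds ha) h1) (h2 a ha) (h3 a ha)
      ).resolve_left (mul_ne_zero ha0 (hne a ha))
  intro a ha
  rcases ne_or_eq a 0 with ha0 | rfl
  · exact off_zero a ha ha0
  have hr := (hdr 0 ha).continuousAt
  have hR := (hdR 0 ha).continuousAt
  refine (hdR 0 ha).unique (hasDerivAt_of_eventually_hasDerivAt_of_ne
    (g := fun y => 4 * r y + R y ^ 2 - 2 * y * R y) ?_ hR (by fun_prop))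
  filter_upwards [nhdsWithin_le_nhds (hI.mem_nhds ha), self_mem_nhdsWithin] with y hy hy0
  exact off_zero y hy hy0 ▸ hdR y hy
end
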